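/- For any prime p and any n ≥ 2, there is no p-valent regular Cayley map on the dicyclic group Dic_n: there exist no subset X of Dic_n with 1 ∉ X, X closed under inverses, X generating Dic_n, and |X| = p, and no permutation q of X acting as a single cycle of length p, such that the Cayley map CM(Dic_n, X, q) is regular. -/

import Mathlib

/-- A Cayley map `CM(G, X, q)`: a finite subset `X` of `G` with `1 ∉ X`,
closed under inverses, generating `G`, together with a permutation `q` of `X`
acting on `X` as a single cycle of length `|X|`. -/
structure CayleyMapData (G : Type*) [Group G] where
  X : Finset G
  one_not_mem : (1 : G) ∉ X
  inv_mem : ∀ x ∈ X, x⁻¹ ∈ X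
  gen : Subgroup.closure (X : Set G) = ⊤
  q : Equiv.Perm {x : G // x ∈ X}
  single_cycle : ∀ x y : {x : G // x ∈ X}, ∃ k : ℕ, (q ^ k) x = y

namespace CayleyMapData

variable {G : Type*} [Group G] (M : CayleyMapData G)

/-- The rotation `R(g, x) = (g, q(x))` on the arc set `G × X`. -/
def rotation : Equiv.Perm (G × {x : G // x ∈ M.X}) :=
  (Equiv.refl G).prodCongr M.q

/-- The arc-reversing involution `L(g, x) = (g·x, x⁻¹)` on the arc set `G × X`. -/
def invol : Equiv.Perm (G × {x : G // x ∈ M.X}) where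
  toFun d := (d.1 * d.2.1, ⟨(d.2.1 : G)⁻¹, M.inv_mem _ d.2.2⟩)
  invFun d := (d.1 * d.2.1, ⟨(d.2.1 : G)⁻¹, M.inv_mem _ d.2.2⟩)
  left_inv := by rintro ⟨g, x, hx⟩; simp
  right_inv := by rintro ⟨g, x, hx⟩; simp

/-- The Cayley map is regular: the monodromy group `⟨R, L⟩` acts sharply
transitively on the arc set. -/
def IsRegular : Prop :=
  ∀ d d' : G × {x : G // x ∈ M.X},
    ∃! m : Subgroup.closure ({M.rotation, M.invol} :
        Set (Equiv.Perm (G × {x : G // x ∈ M.X}))),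
      (m : Equiv.Perm (G × {x : G // x ∈ M.X})) d = d'

/-- Balanced: `(q x)⁻¹ = q (x⁻¹)` for all `x ∈ X`. -/
def IsBalanced : Prop :=
  ∀ x : {x : G // x ∈ M.X},
    ((M.q x : G))⁻¹ = (M.q ⟨(x : G)⁻¹, M.inv_mem _ x.2⟩ : G)

/-- Anti-balanced: `(q x)⁻¹ = q⁻¹ (x⁻¹)` for all `x ∈ X`. -/
def IsAntiBalanced : Prop :=
  ∀ x : {x : G // x ∈ M.X},
    ((M.q x : G))⁻¹ = (M.q⁻¹ ⟨(x : G)⁻¹, M.inv_mem _ x.2⟩ : G)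

end CayleyMapData

/-!
In `Dic_n` the only involution is `a^n`, and every element outside `⟨a⟩` squares to it. If
`|X| = 2`, then `X` is either `{x, x⁻¹}`, making `Dic_n` cyclic, or consists of two distinct
involutions; both are impossible. If `|X| = p` is odd, `X` contains an involution, hence `a^n`,
and some `x = xa i` with `x² = a^n ∈ X`.

For the odd case, index `X` by `ZMod p` along the cycle `q`, starting at `x²`, and let `ι` be the
involution of `ZMod p` induced by inversion, so `ι 0 = 0`; let `x` have index `l`. Regularity says
that an element of the monodromy group fixing one arc is trivial. The words `L R^(l - ι l) L R^l`
and `R^(ι l) L` both send the arc `(1, x²)` to `(x², x⁻¹)`, so they agree on every arc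
`(1, y)`, which is the functional equation `ι (ι k + (l - ι l)) = ι (k - l) + ι l`. This forces
`ι l = l`, i.e. `x⁻¹ = x`, and then `1 = x² ∈ X`.
-/

theorem ZMod.eq_zero_of_add_self_eq_zero {n : ℕ} (hn : Odd n) {a : ZMod n} (h : a + a = 0) :
    a = 0 := by
  have h2 : IsUnit ((2 : ℕ) : ZMod n) :=
    (ZMod.isUnit_iff_coprime 2 n).mpr (Nat.coprime_two_left.mpr hn)
  rwa [← two_mul, ← Nat.cast_two, h2.mul_right_eq_zero] at h

/- The hypothesis says `u ∘ (· + m) ∘ u = (· + u l) ∘ u ∘ (· - l)` with `m = l - u l`; squaring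
it twice gives `u ∘ (· + 4 m) ∘ u = id`. -/
theorem Function.Involutive.apply_eq_self_of_conj_add {A : Type*} [AddCommGroup A]
    (h2 : ∀ a : A, a + a = 0 → a = 0) {u : A → A} (hu : Function.Involutive u) {l : A}
    (h : ∀ k, u (u k + (l - u l)) = u (k - l) + u l) : u l = l := by
  set s := u l
  set m := l - s with hm
  have h_inv (k : A) : u (u k - m) = u (k - s) + l := by
    have hk := h (u (k - s) + l)
    rw [add_sub_cancel_right, hu, sub_add_cancel] at hk
    conv_lhs => rw [← hk, hu, add_sub_cancel_right, hu]
  have h_two (k : A) : u (u k + (m + m)) = u (k - (s + l)) + (s + l) :=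
    calc u (u k + (m + m)) = u (u (u (u k + m)) + m) := by rw [hu, add_assoc]
      _ = u (u (k - l) + s - l) + s := by rw [h, h]
      _ = u (u (k - l) - m) + s := by rw [hm]; abel_nf
      _ = u (k - (s + l)) + (s + l) := by rw [h_inv]; abel_nf
  have h_four (k : A) : u (u k + (m + m + (m + m))) = k :=
    calc u (u k + (m + m + (m + m))) = u (u (u (u k + (m + m))) + (m + m)) := by
          rw [hu, ← add_assoc]
      _ = k := by rw [h_two, h_two, add_sub_cancel_right, hu, sub_add_cancel]
  have h_zero : m + m + (m + m) = 0 := by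
    simpa using hu.injective (show u (u 0 + (m + m + (m + m))) = u (u 0) by rw [h_four, hu])
  exact (sub_eq_zero.mp (h2 m (h2 _ h_zero))).symm

namespace QuaternionGroup

variable {n : ℕ}

theorem eq_one_or_eq_a_of_mul_self_eq_one [NeZero n] {g : QuaternionGroup n} (hg : g * g = 1) :
    g = 1 ∨ g = a n := by
  rcases g with i | i
  · rw [a_mul_a, one_def, a.injEq] at hg
    have hdvd : 2 * n ∣ i.val + i.val := by
      rw [← ZMod.natCast_eq_zero_iff, Nat.cast_add, ZMod.natCast_zmod_val, hg]
    obtain ⟨c, hc⟩ := hdvd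
    have hc2 : c < 2 := by nlinarith [ZMod.val_lt i]
    interval_cases c
    · left
      rw [one_def, (ZMod.val_eq_zero i).mp (by omega)]
    · right
      rw [← ZMod.natCast_zmod_val i, show i.val = n by omega]
  · rw [xa_mul_xa, add_sub_cancel_right, one_def, a.injEq, ZMod.natCast_eq_zero_iff] at hg
    have := Nat.le_of_dvd (Nat.pos_of_neZero n) hg
    have := NeZero.ne n
    omega

theorem not_isCyclic (hn : n ≠ 1) : ¬ IsCyclic (QuaternionGroup n) := by
  intro _
  let := IsCyclic.commGroup (α := QuaternionGroup n)
  have h := mul_comm (a 1 : QuaternionGroup n) (xa 0)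
  rw [a_mul_xa, xa_mul_a, xa.injEq, zero_sub, zero_add, neg_eq_iff_add_eq_zero,
    ← Nat.cast_one, ← Nat.cast_add, ZMod.natCast_eq_zero_iff] at h
  exact hn (Nat.dvd_one.mp ((Nat.mul_dvd_mul_iff_left two_pos).mp (h : 2 * n ∣ 2 * 1)))

theorem exists_xa_mem_of_closure_eq_top {s : Set (QuaternionGroup n)}
    (hs : Subgroup.closure s = ⊤) : ∃ i, xa i ∈ s := by
  by_contra! h
  have hsub : ∀ g ∈ Subgroup.closure s, ∃ i, g = a i := by
    intro g hg
    induction hg using Subgroup.closure_induction with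
    | mem g hg => cases g with
      | a i => exact ⟨i, rfl⟩
      | xa i => exact absurd hg (h i)
    | one => exact ⟨0, rfl⟩
    | mul _ _ _ _ hx hy =>
      obtain ⟨i, rfl⟩ := hx; obtain ⟨j, rfl⟩ := hy; exact ⟨i + j, a_mul_a i j⟩
    | inv _ _ hx => obtain ⟨i, rfl⟩ := hx; exact ⟨-i, rfl⟩
  obtain ⟨i, hi⟩ := hsub (xa 0) (hs ▸ Subgroup.mem_top _)
  cases hi

end QuaternionGroup

namespace CayleyMapData

variable {G : Type*} [Group G] (M : CayleyMapData G)

def invPerm : Equiv.Perm M.X :=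
  (Equiv.inv G).subtypeEquiv fun x => ⟨M.inv_mem x, fun h => inv_inv x ▸ M.inv_mem _ h⟩

@[simp]
theorem coe_invPerm_apply (x : M.X) : (M.invPerm x : G) = (x : G)⁻¹ := rfl

theorem invPerm_involutive : Function.Involutive M.invPerm := fun _ => Subtype.ext (inv_inv _)

theorem exists_inv_eq_self_of_odd_card (h : Odd M.X.card) : ∃ x ∈ M.X, x⁻¹ = x := by
  have : Fact (Nat.Prime 2) := ⟨Nat.prime_two⟩
  obtain ⟨x, hx⟩ := Equiv.Perm.exists_fixed_point_of_prime (p := 2) (n := 1)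
    (by rwa [Fintype.card_coe, ← even_iff_two_dvd, Nat.not_even_iff_odd])
    (σ := M.invPerm) (Equiv.ext M.invPerm_involutive)
  exact ⟨x, x.2, congrArg Subtype.val hx⟩

theorem isCyclic_of_card_eq_two (h2 : M.X.card = 2)
    (hX : ∀ x ∈ M.X, ∀ y ∈ M.X, x⁻¹ = x → y⁻¹ = y → x = y) : IsCyclic G := by
  classical
  obtain ⟨x, y, hxy, hXxy⟩ := Finset.card_eq_two.mp h2
  have hx : x ∈ M.X := by simp [hXxy]
  have hy : y ∈ M.X := by simp [hXxy]
  have hmem (g : G) (hg : g ∈ M.X) : g = x ∨ g = y := by simpa [hXxy] using hg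
  rcases hmem _ (M.inv_mem x hx) with hx' | hx'
  · rcases hmem _ (M.inv_mem y hy) with hy' | hy'
    · exact absurd (by rw [← hx', ← hy', inv_inv]) hxy
    · exact absurd (hX x hx y hy hx' hy') hxy
  · refine isCyclic_iff_exists_zpowers_eq_top.mpr ⟨x, eq_top_iff.mpr ?_⟩
    rw [← M.gen, Subgroup.closure_le]
    intro g hg
    rcases hmem g hg with rfl | rfl
    · exact Subgroup.mem_zpowers g
    · exact hx' ▸ Subgroup.inv_mem _ (Subgroup.mem_zpowers x)

theorem minimalPeriod_q (z : M.X) : Function.minimalPeriod M.q z = M.X.card := by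
  have horbit : MulAction.orbit (Subgroup.zpowers M.q) z = Set.univ :=
    Set.eq_univ_of_forall fun y => by
      obtain ⟨k, hk⟩ := M.single_cycle z y
      exact ⟨⟨M.q ^ k, Subgroup.npow_mem_zpowers _ k⟩, hk⟩
  classical
  have := MulAction.minimalPeriod_eq_card (a := M.q) (b := z)
  simp only [Equiv.Perm.smul_def] at this
  rw [this, Fintype.card_congr (Equiv.setCongr horbit), Fintype.card_setUniv, Fintype.card_coe]

theorem exists_zmod_equiv (z : M.X) :
    ∃ E : ZMod M.X.card ≃ M.X, E 0 = z ∧ ∀ k (j : ℕ), (M.q ^ j) (E k) = E (k + j) := by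
  have : NeZero M.X.card := ⟨Finset.card_ne_zero_of_mem z.2⟩
  have hmod (j : ℕ) : (M.q ^ (j % M.X.card)) z = (M.q ^ j) z := by
    simpa only [Equiv.Perm.coe_pow, M.minimalPeriod_q] using
      Function.iterate_mod_minimalPeriod_eq (f := M.q) (x := z) (n := j)
  let E : ZMod M.X.card → M.X := fun k => (M.q ^ k.val) z
  have hE (k : ZMod M.X.card) (j : ℕ) : (M.q ^ j) (E k) = E (k + j) := by
    simp only [E, ← Equiv.Perm.mul_apply, ← pow_add]
    rw [show k + j = ((k.val + j : ℕ) : ZMod M.X.card) by simp, ZMod.val_natCast, hmod, add_comm]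
  have hsurj : Function.Surjective E := fun y => by
    obtain ⟨j, rfl⟩ := M.single_cycle z y
    exact ⟨j, by simp only [E, ZMod.val_natCast, hmod]⟩
  exact ⟨Equiv.ofBijective E ((Fintype.bijective_iff_surjective_and_card E).mpr
    ⟨hsurj, by simp⟩), by simp [E], hE⟩

def monodromy : Subgroup (Equiv.Perm (G × M.X)) := Subgroup.closure {M.rotation, M.invol}

theorem rotation_mem_monodromy : M.rotation ∈ M.monodromy :=
  Subgroup.subset_closure (Set.mem_insert _ _)

theorem invol_mem_monodromy : M.invol ∈ M.monodromy :=
  Subgroup.subset_closure (Set.mem_insert_of_mem _ rfl)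

@[simp]
theorem rotation_pow_apply (j : ℕ) (g : G) (x : M.X) :
    (M.rotation ^ j) (g, x) = (g, (M.q ^ j) x) := by
  induction j generalizing x with
  | zero => rfl
  | succ j ih => rw [pow_succ, Equiv.Perm.mul_apply, pow_succ, Equiv.Perm.mul_apply, ← ih]; rfl

@[simp]
theorem invol_apply (g : G) (x : M.X) : M.invol (g, x) = (g * x, M.invPerm x) := rfl

variable {M}

theorem IsRegular.eq_of_apply_eq (hreg : M.IsRegular) {m m' : Equiv.Perm (G × M.X)}
    (hm : m ∈ M.monodromy) (hm' : m' ∈ M.monodromy) {d : G × M.X} (h : m d = m' d) : m = m' :=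
  congrArg Subtype.val ((hreg d (m' d)).unique (y₁ := ⟨m, hm⟩) (y₂ := ⟨m', hm'⟩) h rfl)

theorem IsRegular.mul_self_notMem (hreg : M.IsRegular) (hodd : Odd M.X.card) {x : G}
    (hx : x ∈ M.X) (hinv : (x * x)⁻¹ = x * x) : x * x ∉ M.X := by
  intro hxx
  have : NeZero M.X.card := ⟨Finset.card_ne_zero_of_mem hx⟩
  obtain ⟨E, hE0, hE⟩ := M.exists_zmod_equiv ⟨x * x, hxx⟩
  let ι : ZMod M.X.card → ZMod M.X.card := fun k => E.symm (M.invPerm (E k))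
  have hι (k) : M.invPerm (E k) = E (ι k) := (E.apply_symm_apply _).symm
  have hι_invol : Function.Involutive ι := fun k => by simp [ι, M.invPerm_involutive _]
  have hι0 : ι 0 = 0 := E.symm_apply_eq.mpr (Subtype.ext (by simp [hE0, hinv]))
  obtain ⟨l, hl⟩ := E.surjective ⟨x, hx⟩
  have hR (j k : ZMod M.X.card) (g : G) : (M.rotation ^ j.val) (g, E k) = (g, E (k + j)) := by
    rw [rotation_pow_apply, hE, ZMod.natCast_zmod_val]
  have hL (k : ZMod M.X.card) (g : G) : M.invol (g, E k) = (g * E k, E (ι k)) := by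
    rw [invol_apply, hι]
  have hRm := M.rotation_mem_monodromy
  have hLm := M.invol_mem_monodromy
  let m₁ := M.invol * M.rotation ^ (l - ι l).val * M.invol * M.rotation ^ l.val
  let m₂ := M.rotation ^ (ι l).val * M.invol
  have hm : m₁ = m₂ := by
    refine hreg.eq_of_apply_eq (d := (1, E 0))
      (mul_mem (mul_mem (mul_mem hLm (pow_mem hRm _)) hLm) (pow_mem hRm _))
      (mul_mem (pow_mem hRm _) hLm) ?_
    simp only [m₁, m₂, Equiv.Perm.mul_apply, hR, hL, hι0, zero_add, add_sub_cancel]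
    simp [hl, hE0]
  have key (k : ZMod M.X.card) : ι (ι k + (l - ι l)) = ι (k - l) + ι l := by
    simpa [m₁, m₂, hR, hL] using congrArg (fun m => (m (1, E (k - l))).2) hm
  have hl_fix : ι l = l :=
    hι_invol.apply_eq_self_of_conj_add (fun _ => ZMod.eq_zero_of_add_self_eq_zero hodd) key
  have hxinv : x⁻¹ = x := by
    simpa [hl] using congrArg Subtype.val ((hι l).trans (congrArg E hl_fix))
  exact M.one_not_mem (by rwa [← inv_mul_cancel x, hxinv])

end CayleyMapData

/-- There is no prime-valent regular Cayley map on any dicyclic group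
`Dic_n = QuaternionGroup n` (`n ≥ 2`). -/
theorem no_prime_valent_regular_cayley_map_dicyclic
    (p n : ℕ) (hp : p.Prime) (hn : 2 ≤ n) :
    ¬ ∃ M : CayleyMapData (QuaternionGroup n), M.X.card = p ∧ M.IsRegular := by
  rintro ⟨M, rfl, hreg⟩
  have : NeZero n := ⟨by omega⟩
  have h_inv (g) (hg : g ∈ M.X) (hg' : g⁻¹ = g) : g = QuaternionGroup.a n :=
    (QuaternionGroup.eq_one_or_eq_a_of_mul_self_eq_one (mul_eq_one_iff_eq_inv.mpr hg'.symm)).resolve_left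
      fun h => M.one_not_mem (h ▸ hg)
  rcases hp.eq_two_or_odd' with h2 | hodd
  · exact QuaternionGroup.not_isCyclic (by omega) <| M.isCyclic_of_card_eq_two h2
      fun x hx y hy hx' hy' => (h_inv x hx hx').trans (h_inv y hy hy').symm
  · obtain ⟨z, hz, hz'⟩ := M.exists_inv_eq_self_of_odd_card hodd
    obtain ⟨i, hi⟩ := QuaternionGroup.exists_xa_mem_of_closure_eq_top M.gen
    have hsq : QuaternionGroup.xa i * QuaternionGroup.xa i = z := by
      rw [← sq, QuaternionGroup.xa_sq, h_inv z hz hz']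
    exact hreg.mul_self_notMem hodd hi (hsq ▸ hz') (hsq ▸ hz)
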